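/- Perturbation bound for α-trace powers: let α ≥ 2 and let A, Â be n×n symmetric positive semidefinite matrices with eigenvalues in [0,1] and tr A = tr Â = 1. Then |tr(Â^α) − tr(A^α)| ≤ 2α ‖Â − A‖, where ‖·‖ is the spectral (operator) norm. -/

import Mathlib

open Matrix

noncomputable def mpow {m : Type*} [Fintype m] [DecidableEq m] (A : Matrix m m ℝ) (r : ℝ) :
    Matrix m m ℝ :=
  if hA : A.IsHermitian then
    (hA.eigenvectorUnitary : Matrix m m ℝ) *
      Matrix.diagonal (fun i => (hA.eigenvalues i : ℝ) ^ r) *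
      star (hA.eigenvectorUnitary : Matrix m m ℝ)
  else 0

/-- Sandwiched quantum Rényi divergence of order `α`. -/
noncomputable def sandwichedRenyi {m : Type*} [Fintype m] [DecidableEq m]
    (α : ℝ) (A B : Matrix m m ℝ) : ℝ :=
  (α - 1)⁻¹ *
    Real.log ((mpow (mpow B ((1 - α) / (2 * α)) * A * mpow B ((1 - α) / (2 * α))) α).trace
      / A.trace)

/-- Regularized sandwiched quantum Rényi divergence `D_{α,λ}(A‖B) := D_α(A‖B + λI)`. -/
noncomputable def regRenyi {m : Type*} [Fintype m] [DecidableEq m]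
    (α lam : ℝ) (A B : Matrix m m ℝ) : ℝ :=
  sandwichedRenyi α A (B + lam • 1)

open scoped Matrix.Norms.L2Operator

/-!
Diagonalise `Â = V diag(μ) Vᵀ` and read `A` in the same basis: the diagonal `m_j = (Vᵀ A V)_jj`
lies in `[0,1]`, sums to `1` and satisfies `|μ_j - m_j| ≤ ‖Â - A‖`, so this replaces Weyl's
inequality. Peierls' inequality (Jensen for the doubly stochastic matrix `(W_ij²)`, `W` the
orthogonal matrix relating the two eigenbases) gives `∑ m_j^α ≤ tr A^α`, hence
`tr Â^α - tr A^α ≤ ∑ (μ_j^α - m_j^α) ≤ α ∑ |μ_j - m_j| (μ_j + m_j) ≤ 2α ‖Â - A‖`.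
-/

namespace Real

theorem rpow_sub_rpow_le_mul_rpow {α x y : ℝ} (hα : 1 ≤ α) (hy : 0 ≤ y) (hyx : y ≤ x) :
    x ^ α - y ^ α ≤ α * x ^ (α - 1) * (x - y) := by
  rcases (hy.trans hyx).eq_or_lt with rfl | hx
  · simp [le_antisymm hyx hy]
  set t := y / x
  have ht : y = t * x := (div_mul_cancel₀ y hx.ne').symm
  have hbernoulli : 1 + α * (t - 1) ≤ t ^ α := by
    simpa using one_add_mul_self_le_rpow_one_add (by linarith [div_nonneg hy hx.le] : -1 ≤ t - 1) hα
  have hxα : x ^ α = x ^ (α - 1) * x := by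
    rw [← rpow_add_one hx.ne', sub_add_cancel]
  calc x ^ α - y ^ α = x ^ α * (1 - t ^ α) := by
        rw [ht, mul_rpow (div_nonneg hy hx.le) hx.le]; ring
    _ ≤ x ^ α * (α * (1 - t)) := by gcongr; linarith
    _ = α * x ^ (α - 1) * (x - y) := by rw [hxα, ht]; ring

theorem abs_rpow_sub_rpow_le_mul_add {α x y : ℝ} (hα : 2 ≤ α) (hx : x ∈ Set.Icc (0 : ℝ) 1)
    (hy : y ∈ Set.Icc (0 : ℝ) 1) : |x ^ α - y ^ α| ≤ α * |x - y| * (x + y) := by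
  wlog hyx : y ≤ x generalizing x y
  · rw [abs_sub_comm, abs_sub_comm x, add_comm]
    exact this hy hx (le_of_not_ge hyx)
  have hpow : y ^ α ≤ x ^ α := rpow_le_rpow hy.1 hyx (by linarith)
  have hxα : x ^ (α - 1) ≤ x + y := by
    calc x ^ (α - 1) ≤ x ^ (1 : ℝ) :=
          rpow_le_rpow_of_exponent_ge' hx.1 hx.2 zero_le_one (by linarith)
      _ ≤ x + y := by rw [rpow_one]; linarith [hy.1]
  rw [abs_of_nonneg (sub_nonneg.2 hpow), abs_of_nonneg (sub_nonneg.2 hyx)]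
  calc x ^ α - y ^ α ≤ α * x ^ (α - 1) * (x - y) :=
        rpow_sub_rpow_le_mul_rpow (by linarith) hy.1 hyx
    _ ≤ α * (x + y) * (x - y) := by gcongr
    _ = α * (x - y) * (x + y) := by ring

end Real

namespace Matrix

variable {n : Type*} [Fintype n] [DecidableEq n]

theorem trace_mpow {A : Matrix n n ℝ} (hA : A.IsHermitian) (r : ℝ) :
    (mpow A r).trace = ∑ i, hA.eigenvalues i ^ r := by
  rw [mpow, dif_pos hA, trace_mul_cycle, mem_unitaryGroup_iff'.mp hA.eigenvectorUnitary.2,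
    one_mul, trace_diagonal]

theorem abs_apply_self_le_l2_opNorm (M : Matrix n n ℝ) (j : n) : |M j j| ≤ ‖M‖ := by
  set e : EuclideanSpace ℝ n := EuclideanSpace.single j 1
  have he : ‖e‖ = 1 := by simp [e]
  have hentry : M j j = inner ℝ e (toEuclideanCLM (𝕜 := ℝ) M e) := by
    rw [inner_toEuclideanCLM]; simp [e, mulVec, dotProduct]
  calc |M j j| ≤ ‖e‖ * ‖toEuclideanCLM (𝕜 := ℝ) M e‖ := hentry ▸ abs_real_inner_le_norm _ _
    _ ≤ ‖e‖ * (‖toEuclideanCLM (𝕜 := ℝ) M‖ * ‖e‖) := by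
        gcongr; exact ContinuousLinearMap.le_opNorm _ _
    _ = ‖M‖ := by rw [he, one_mul, mul_one, cstar_norm_def]

theorem abs_star_mul_mul_apply_self_le {V : Matrix n n ℝ} (hV : V ∈ unitaryGroup n ℝ)
    (E : Matrix n n ℝ) (j : n) : |(star V * E * V) j j| ≤ ‖E‖ := by
  calc |(star V * E * V) j j| ≤ ‖star V * E * V‖ := abs_apply_self_le_l2_opNorm _ j
    _ = ‖E‖ := by
      rw [CStarRing.norm_mul_mem_unitary _ hV,
        CStarRing.norm_mem_unitary_mul _ (Unitary.star_mem hV)]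

theorem PosSemidef.star_mul_mul_apply_self_mem_Icc {P : Matrix n n ℝ} (hP : P.PosSemidef)
    (hP1 : (1 - P).PosSemidef) {V : Matrix n n ℝ} (hV : V ∈ unitaryGroup n ℝ) (j : n) :
    (star V * P * V) j j ∈ Set.Icc (0 : ℝ) 1 := by
  have hconj (Q : Matrix n n ℝ) (hQ : Q.PosSemidef) : 0 ≤ (star V * Q * V) j j :=
    (hQ.conjTranspose_mul_mul_same V).diag_nonneg
  have h1 : star V * (1 - P) * V = 1 - star V * P * V := by
    rw [mul_sub, sub_mul, mul_one, mem_unitaryGroup_iff'.mp hV]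
  refine ⟨hconj P hP, ?_⟩
  have := hconj _ hP1
  rw [h1, sub_apply, one_apply_eq] at this
  linarith

theorem of_sq_mem_doublyStochastic {W : Matrix n n ℝ} (hW : W ∈ unitaryGroup n ℝ) :
    of (fun i j => W i j ^ 2) ∈ doublyStochastic ℝ n := by
  refine mem_doublyStochastic_iff_sum.2 ⟨fun i j => sq_nonneg _, fun i => ?_, fun j => ?_⟩
  · simpa [mul_apply, sq] using congr_fun₂ (mem_unitaryGroup_iff.mp hW) i i
  · simpa [mul_apply, sq] using congr_fun₂ (mem_unitaryGroup_iff'.mp hW) j j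

theorem star_mul_diagonal_mul_apply_self (W : Matrix n n ℝ) (d : n → ℝ) (j : n) :
    (star W * diagonal d * W) j j = ∑ i, W i j ^ 2 * d i := by
  rw [mul_apply]
  simp only [mul_diagonal, star_apply, star_trivial]
  exact Finset.sum_congr rfl fun i _ => by ring

/-- Peierls' inequality. -/
theorem IsHermitian.sum_convexOn_star_mul_mul_apply_self_le {A : Matrix n n ℝ}
    (hA : A.IsHermitian) {V : Matrix n n ℝ} (hV : V ∈ unitaryGroup n ℝ) {s : Set ℝ}
    {f : ℝ → ℝ} (hf : ConvexOn ℝ s f) (hs : ∀ i, hA.eigenvalues i ∈ s) :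
    ∑ j, f ((star V * A * V) j j) ≤ ∑ i, f (hA.eigenvalues i) := by
  set U : Matrix n n ℝ := (hA.eigenvectorUnitary : Matrix n n ℝ)
  set W := star U * V
  have hW : W ∈ unitaryGroup n ℝ := mul_mem (Unitary.star_mem hA.eigenvectorUnitary.2) hV
  have hconj : star V * A * V = star W * diagonal hA.eigenvalues * W := by
    conv_lhs => rw [show A = U * diagonal hA.eigenvalues * star U by simpa using hA.spectral_theorem]
    simp only [W, star_mul, star_star, mul_assoc]
  have hWds := mem_doublyStochastic_iff_sum.1 (of_sq_mem_doublyStochastic hW)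
  simp only [of_apply] at hWds
  calc ∑ j, f ((star V * A * V) j j) = ∑ j, f (∑ i, W i j ^ 2 • hA.eigenvalues i) := by
        simp [hconj, star_mul_diagonal_mul_apply_self]
    _ ≤ ∑ j, ∑ i, W i j ^ 2 • f (hA.eigenvalues i) := Finset.sum_le_sum fun j _ =>
        hf.map_sum_le (fun i _ => hWds.1 i j) (hWds.2.2 j) fun i _ => hs i
    _ = ∑ i, f (hA.eigenvalues i) := by
        rw [Finset.sum_comm]
        simp [← Finset.sum_mul, hWds.2.1]

theorem trace_mpow_sub_trace_mpow_le {α : ℝ} (hα : 2 ≤ α) {A B : Matrix n n ℝ}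
    (hA : A.PosSemidef) (hAI : (1 - A).PosSemidef) (hB : B.PosSemidef) (hBI : (1 - B).PosSemidef)
    (htrA : A.trace = 1) (htrB : B.trace = 1) :
    (mpow B α).trace - (mpow A α).trace ≤ 2 * α * ‖B - A‖ := by
  set V : Matrix n n ℝ := (hB.1.eigenvectorUnitary : Matrix n n ℝ)
  have hV : V ∈ unitaryGroup n ℝ := hB.1.eigenvectorUnitary.2
  set μ := hB.1.eigenvalues
  set M := star V * A * V
  have hdiag : star V * B * V = diagonal μ := by
    simpa using hB.1.conjStarAlgAut_star_eigenvectorUnitary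
  have hμ (j : n) : μ j = (star V * B * V) j j := by rw [hdiag, diagonal_apply_eq]
  have hμ01 (j : n) : μ j ∈ Set.Icc (0 : ℝ) 1 :=
    hμ j ▸ hB.star_mul_mul_apply_self_mem_Icc hBI hV j
  have hM01 (j : n) : M j j ∈ Set.Icc (0 : ℝ) 1 := hA.star_mul_mul_apply_self_mem_Icc hAI hV j
  have hgap (j : n) : |μ j - M j j| ≤ ‖B - A‖ := by
    rw [hμ, ← Matrix.sub_apply, ← sub_mul, ← mul_sub]
    exact abs_star_mul_mul_apply_self_le hV _ j
  have hμsum : ∑ j, μ j = 1 := by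
    simpa [μ] using hB.1.trace_eq_sum_eigenvalues.symm.trans htrB
  have hMsum : ∑ j, M j j = 1 := by
    change M.trace = 1
    rw [← htrA, trace_mul_cycle, mem_unitaryGroup_iff.mp hV, one_mul]
  have hpeierls : ∑ j, M j j ^ α ≤ (mpow A α).trace := by
    rw [trace_mpow hA.1]
    exact hA.1.sum_convexOn_star_mul_mul_apply_self_le hV (convexOn_rpow (by linarith))
      hA.eigenvalues_nonneg
  have hstep (j : n) : μ j ^ α - M j j ^ α ≤ α * ‖B - A‖ * (μ j + M j j) :=
    calc μ j ^ α - M j j ^ α ≤ α * |μ j - M j j| * (μ j + M j j) :=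
          (le_abs_self _).trans (Real.abs_rpow_sub_rpow_le_mul_add hα (hμ01 j) (hM01 j))
      _ ≤ α * ‖B - A‖ * (μ j + M j j) := by
          gcongr
          exacts [add_nonneg (hμ01 j).1 (hM01 j).1, hgap j]
  calc (mpow B α).trace - (mpow A α).trace ≤ ∑ j, (μ j ^ α - M j j ^ α) := by
        rw [trace_mpow hB.1, Finset.sum_sub_distrib]; linarith
    _ ≤ ∑ j, α * ‖B - A‖ * (μ j + M j j) := Finset.sum_le_sum fun j _ => hstep j
    _ = 2 * α * ‖B - A‖ := by rw [← Finset.mul_sum, Finset.sum_add_distrib, hμsum, hMsum]; ring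

end Matrix

/-- Perturbation bound for `α`-trace powers: for symmetric PSD matrices `A, Â` with
eigenvalues in `[0,1]` and unit trace, `|tr(Â^α) − tr(A^α)| ≤ 2α‖Â − A‖` in the
spectral (ℓ²-operator) norm, for `α ≥ 2`. -/
theorem trace_rpow_perturbation {n : Type*} [Fintype n] [DecidableEq n]
    (α : ℝ) (hα : 2 ≤ α)
    (A Ahat : Matrix n n ℝ)
    (hA : A.PosSemidef) (hAI : ((1 : Matrix n n ℝ) - A).PosSemidef)
    (hAhat : Ahat.PosSemidef) (hAhatI : ((1 : Matrix n n ℝ) - Ahat).PosSemidef)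
    (htrA : A.trace = 1) (htrAhat : Ahat.trace = 1) :
    |(mpow Ahat α).trace - (mpow A α).trace| ≤ 2 * α * ‖Ahat - A‖ := by
  refine abs_sub_le_iff.2 ⟨trace_mpow_sub_trace_mpow_le hα hA hAI hAhat hAhatI htrA htrAhat, ?_⟩
  rw [norm_sub_rev]
  exact trace_mpow_sub_trace_mpow_le hα hAhat hAhatI hA hAI htrAhat htrA
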